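/- Let 0 < c < 1. For every n ≥ 2 and every natural number y, the component of vertex 1 in G(n, c/n) satisfies the exponential tail bound P( |C_1| ≥ y ) ≤ (1/c)·exp( −(c − 1 − log c)·y ). -/

import Mathlib

set_option maxHeartbeats 1000000

open MeasureTheory ProbabilityTheory Filter Topology
open scoped ENNReal NNReal

noncomputable def bernoulliMeasure (p : ℝ) : Measure Bool :=
  ENNReal.ofReal p • Measure.dirac true + ENNReal.ofReal (1 - p) • Measure.dirac false

noncomputable def erdosRenyi (n : ℕ) (p : ℝ) :
    Measure ({e : Fin n × Fin n // e.1 < e.2} → Bool) :=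
  Measure.pi fun _ => bernoulliMeasure p

def graphOf {n : ℕ} (x : {e : Fin n × Fin n // e.1 < e.2} → Bool) : SimpleGraph (Fin n) where
  Adj i j := (∃ h : i < j, x ⟨(i, j), h⟩ = true) ∨ (∃ h : j < i, x ⟨(j, i), h⟩ = true)
  symm := ⟨by intro i j h; tauto⟩
  loopless := ⟨by rintro i (⟨h, -⟩ | ⟨h, -⟩) <;> exact absurd h (lt_irrefl i)⟩

noncomputable def compSize {n : ℕ} (G : SimpleGraph (Fin n)) (v : Fin n) : ℕ :=
  Nat.card {y : Fin n // G.Reachable v y}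

namespace ERP
variable {n : ℕ}

abbrev EI (n : ℕ) := {e : Fin n × Fin n // e.1 < e.2}
abbrev Cfg (n : ℕ) := EI n → Bool

instance decAdj (x : Cfg n) : DecidableRel (graphOf x).Adj := fun i j =>
  inferInstanceAs (Decidable ((∃ h : i < j, x ⟨(i, j), h⟩ = true) ∨
    (∃ h : j < i, x ⟨(j, i), h⟩ = true)))

noncomputable def phi (p : ℝ) (b : Bool) : ℝ := if b then p else 1 - p

lemma phi_nonneg {p : ℝ} (hp0 : 0 ≤ p) (hp1 : p ≤ 1) (b : Bool) : 0 ≤ phi p b := by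
  cases b <;> simp [phi] <;> linarith

noncomputable def wt (p : ℝ) (x : Cfg n) : ℝ := ∏ e, phi p (x e)

lemma wt_nonneg {p : ℝ} (hp0 : 0 ≤ p) (hp1 : p ≤ 1) (x : Cfg n) : 0 ≤ wt p x :=
  Finset.prod_nonneg fun _ _ => phi_nonneg hp0 hp1 _

lemma sum_prod_phi {ι : Type*} [Fintype ι] [DecidableEq ι] (p : ℝ) (h : ι → Bool → ℝ) :
    ∑ x : ι → Bool, ∏ i, (phi p (x i) * h i (x i))
      = ∏ i, (p * h i true + (1 - p) * h i false) := by
  have := Finset.prod_univ_sum (fun _ : ι => (Finset.univ : Finset Bool))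
    (fun i b => phi p b * h i b)
  rw [Fintype.piFinset_univ] at this
  rw [← this]
  exact Finset.prod_congr rfl fun i _ => by rw [Fintype.sum_bool]; simp [phi]

lemma sum_prod_phi_one {ι : Type*} [Fintype ι] [DecidableEq ι] (p : ℝ) :
    ∑ x : ι → Bool, ∏ i, phi p (x i) = 1 := by
  simpa using sum_prod_phi (ι := ι) p (fun _ _ => 1)

/-! ### splitting along a coordinate predicate -/

def merge (q : EI n → Prop) [DecidablePred q] (x₁ : {e // q e} → Bool) (x₂ : {e // ¬ q e} → Bool) :
    Cfg n := fun e => if h : q e then x₁ ⟨e, h⟩ else x₂ ⟨e, h⟩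

lemma sum_split (q : EI n → Prop) [DecidablePred q] (f : Cfg n → ℝ) :
    ∑ x : Cfg n, f x
      = ∑ x₁ : {e // q e} → Bool, ∑ x₂ : {e // ¬ q e} → Bool, f (merge q x₁ x₂) := by
  rw [← Equiv.sum_comp (Equiv.piEquivPiSubtypeProd q (fun _ => Bool)).symm f,
    Fintype.sum_prod_type]
  rfl

lemma wt_merge (p : ℝ) (q : EI n → Prop) [DecidablePred q] (x₁ : {e // q e} → Bool) (x₂ : {e // ¬ q e} → Bool) :
    wt p (merge q x₁ x₂)
      = (∏ i : {e // q e}, phi p (x₁ i)) * ∏ i : {e // ¬ q e}, phi p (x₂ i) := by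
  rw [wt, ← Fintype.prod_subtype_mul_prod_subtype q (fun e => phi p (merge q x₁ x₂ e))]
  congr 1
  · exact Finset.prod_congr rfl fun i _ => by rw [merge, dif_pos i.2]
  · exact Finset.prod_congr rfl fun i _ => by rw [merge, dif_neg i.2]

/-! ### restricted graphs and components -/

def gr (V : Finset (Fin n)) (x : Cfg n) : SimpleGraph (Fin n) where
  Adj i j := (graphOf x).Adj i j ∧ i ∈ V ∧ j ∈ V
  symm := ⟨fun i j ⟨h, hi, hj⟩ => ⟨h.symm, hj, hi⟩⟩
  loopless := ⟨fun i h => (graphOf x).loopless.irrefl i h.1⟩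

open Classical in
noncomputable def comp (V A : Finset (Fin n)) (x : Cfg n) : Finset (Fin n) :=
  V.filter fun v => ∃ a ∈ A, (gr V x).Reachable a v

lemma comp_subset (V A : Finset (Fin n)) (x : Cfg n) : comp V A x ⊆ V := by
  intro v hv
  simp only [comp, Finset.mem_filter] at hv
  exact hv.1

lemma comp_empty (V : Finset (Fin n)) (x : Cfg n) : comp V ∅ x = ∅ := by
  simp [comp]

lemma gr_univ (x : Cfg n) : gr Finset.univ x = graphOf x := by
  ext i j; simp [gr]

/-- adjacency between two non-`a` vertices only depends on coordinates away from `a`. -/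
lemma adj_congr_off {a : Fin n} {x x' : Cfg n}
    (h : ∀ e : EI n, ¬ (e.1.1 = a ∨ e.1.2 = a) → x e = x' e)
    {i j : Fin n} (hi : i ≠ a) (hj : j ≠ a) :
    (graphOf x).Adj i j ↔ (graphOf x').Adj i j := by
  constructor <;> rintro (⟨hlt, hx⟩ | ⟨hlt, hx⟩)
  · exact Or.inl ⟨hlt, by rw [← h ⟨(i, j), hlt⟩ (by simp [hi, hj])]; exact hx⟩
  · exact Or.inr ⟨hlt, by rw [← h ⟨(j, i), hlt⟩ (by simp [hi, hj])]; exact hx⟩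
  · exact Or.inl ⟨hlt, by rw [h ⟨(i, j), hlt⟩ (by simp [hi, hj])]; exact hx⟩
  · exact Or.inr ⟨hlt, by rw [h ⟨(j, i), hlt⟩ (by simp [hi, hj])]; exact hx⟩

/-- adjacency to `a` only depends on coordinates touching `a`. -/
lemma adj_congr_on {a : Fin n} {x x' : Cfg n}
    (h : ∀ e : EI n, (e.1.1 = a ∨ e.1.2 = a) → x e = x' e)
    {v : Fin n} :
    (graphOf x).Adj a v ↔ (graphOf x').Adj a v := by
  constructor <;> rintro (⟨hlt, hx⟩ | ⟨hlt, hx⟩)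
  · exact Or.inl ⟨hlt, by rw [← h ⟨(a, v), hlt⟩ (by simp)]; exact hx⟩
  · exact Or.inr ⟨hlt, by rw [← h ⟨(v, a), hlt⟩ (by simp)]; exact hx⟩
  · exact Or.inl ⟨hlt, by rw [h ⟨(a, v), hlt⟩ (by simp)]; exact hx⟩
  · exact Or.inr ⟨hlt, by rw [h ⟨(v, a), hlt⟩ (by simp)]; exact hx⟩

lemma gr_congr_off {a : Fin n} {V : Finset (Fin n)} (haV : a ∉ V) {x x' : Cfg n}
    (h : ∀ e : EI n, ¬ (e.1.1 = a ∨ e.1.2 = a) → x e = x' e) :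
    gr V x = gr V x' := by
  ext i j
  show (graphOf x).Adj i j ∧ i ∈ V ∧ j ∈ V ↔ (graphOf x').Adj i j ∧ i ∈ V ∧ j ∈ V
  constructor <;> rintro ⟨hadj, hi, hj⟩
  · exact ⟨(adj_congr_off h (fun e => haV (e ▸ hi)) (fun e => haV (e ▸ hj))).1 hadj, hi, hj⟩
  · exact ⟨(adj_congr_off h (fun e => haV (e ▸ hi)) (fun e => haV (e ▸ hj))).2 hadj, hi, hj⟩

lemma comp_congr_off {a : Fin n} {V : Finset (Fin n)} (haV : a ∉ V) (A : Finset (Fin n))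
    {x x' : Cfg n} (h : ∀ e : EI n, ¬ (e.1.1 = a ∨ e.1.2 = a) → x e = x' e) :
    comp V A x = comp V A x' := by
  unfold comp; rw [gr_congr_off haV h]

/-! ### the deletion lemma -/

def nbrs (a : Fin n) (W : Finset (Fin n)) (x : Cfg n) : Finset (Fin n) :=
  W.filter fun v => (graphOf x).Adj a v

lemma walk_del {a : Fin n} {V : Finset (Fin n)} {x : Cfg n} (A : Finset (Fin n))
    (haA : a ∈ A) :
    ∀ {s v : Fin n}, (gr V x).Walk s v →
      (s = a ∨ (s ≠ a ∧ ∃ b ∈ A.erase a ∪ nbrs a (V.erase a) x, (gr (V.erase a) x).Reachable b s)) →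
      v ≠ a →
      ∃ b ∈ A.erase a ∪ nbrs a (V.erase a) x, (gr (V.erase a) x).Reachable b v := by
    intro s v w
    induction w with
    | nil =>
      rintro (rfl | ⟨hne, hb⟩) hva
      · exact absurd rfl hva
      · exact hb
    | @cons s u v h w ih =>
      intro hs hva
      obtain ⟨hadj, hsV, huV⟩ := h
      by_cases hu : u = a
      · exact ih (Or.inl hu) hva
      · have huV' : u ∈ V.erase a := Finset.mem_erase.2 ⟨hu, huV⟩
        rcases hs with hseq | ⟨hsa, b, hbB, hr⟩
        · -- s = a, so u is a neighbour of a
          have : u ∈ nbrs a (V.erase a) x := Finset.mem_filter.2 ⟨huV', hseq ▸ hadj⟩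
          exact ih (Or.inr ⟨hu, u, Finset.mem_union_right _ this, SimpleGraph.Reachable.refl u⟩) hva
        · have hsV' : s ∈ V.erase a := Finset.mem_erase.2 ⟨hsa, hsV⟩
          have hadj' : (gr (V.erase a) x).Adj s u := ⟨hadj, hsV', huV'⟩
          exact ih (Or.inr ⟨hu, b, hbB, hr.trans hadj'.reachable⟩) hva

lemma gr_mono {V W : Finset (Fin n)} (h : V ⊆ W) (x : Cfg n) : gr V x ≤ gr W x := by
  intro i j ⟨hadj, hi, hj⟩
  exact ⟨hadj, h hi, h hj⟩

lemma comp_del {a : Fin n} {V A : Finset (Fin n)} (haA : a ∈ A) (hAV : A ⊆ V) (x : Cfg n) :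
    comp V A x = insert a (comp (V.erase a) (A.erase a ∪ nbrs a (V.erase a) x) x) := by
  ext v
  simp only [comp, Finset.mem_insert, Finset.mem_filter]
  constructor
  · rintro ⟨hvV, s, hsA, hr⟩
    by_cases hva : v = a
    · exact Or.inl hva
    · refine Or.inr ⟨Finset.mem_erase.2 ⟨hva, hvV⟩, ?_⟩
      obtain ⟨w⟩ := hr
      refine walk_del A haA w ?_ hva
      by_cases hsa : s = a
      · exact Or.inl hsa
      · exact Or.inr ⟨hsa, s, Finset.mem_union_left _ (Finset.mem_erase.2 ⟨hsa, hsA⟩),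
          SimpleGraph.Reachable.refl s⟩
  · rintro (rfl | ⟨hvV', b, hbB, hr⟩)
    · exact ⟨hAV haA, v, haA, SimpleGraph.Reachable.refl v⟩
    · have hr' : (gr V x).Reachable b v := hr.mono (gr_mono (Finset.erase_subset _ _) x)
      refine ⟨Finset.mem_of_mem_erase hvV', ?_⟩
      rcases Finset.mem_union.1 hbB with hb | hb
      · exact ⟨b, Finset.mem_of_mem_erase hb, hr'⟩
      · obtain ⟨hbV', hadj⟩ := Finset.mem_filter.1 hb
        have : (gr V x).Adj a b := ⟨hadj, hAV haA, Finset.mem_of_mem_erase hbV'⟩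
        exact ⟨a, haA, this.reachable.trans hr'⟩

lemma card_comp_del {a : Fin n} {V A : Finset (Fin n)} (haA : a ∈ A) (hAV : A ⊆ V) (x : Cfg n) :
    (comp V A x).card = (comp (V.erase a) (A.erase a ∪ nbrs a (V.erase a) x) x).card + 1 := by
  rw [comp_del haA hAV x, Finset.card_insert_of_notMem, Nat.add_comm]
  intro hmem
  exact (Finset.mem_erase.1 (comp_subset _ _ _ hmem)).1 rfl

/-! ### coordinates touching a vertex -/

def qp (a : Fin n) (e : EI n) : Prop := e.1.1 = a ∨ e.1.2 = a

instance decQp (a : Fin n) : DecidablePred (qp a) := fun e =>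
  inferInstanceAs (Decidable (e.1.1 = a ∨ e.1.2 = a))

def edgeAt (a v : Fin n) (h : v ≠ a) : EI n :=
  if hlt : a < v then ⟨(a, v), hlt⟩
  else ⟨(v, a), lt_of_le_of_ne (le_of_not_gt hlt) h⟩

lemma qp_edgeAt (a v : Fin n) (h : v ≠ a) : qp a (edgeAt a v h) := by
  unfold edgeAt qp
  split <;> simp

def other (a : Fin n) (e : EI n) : Fin n := if e.1.1 = a then e.1.2 else e.1.1

lemma other_edgeAt (a v : Fin n) (h : v ≠ a) : other a (edgeAt a v h) = v := by
  unfold edgeAt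
  split
  · simp [other]
  · unfold other
    simp only
    rw [if_neg h]

lemma other_ne (a : Fin n) (e : EI n) (he : qp a e) : other a e ≠ a := by
  rcases he with h1 | h2
  · unfold other; rw [if_pos h1]
    intro h'
    have := e.2
    rw [h1, h'] at this
    exact lt_irrefl a this
  · have h1 : e.1.1 ≠ a := by
      intro h'
      have := e.2
      rw [h', h2] at this
      exact lt_irrefl a this
    unfold other; rw [if_neg h1]
    exact h1

lemma edgeAt_other (a : Fin n) (e : EI n) (he : qp a e) :
    edgeAt a (other a e) (other_ne a e he) = e := by
  apply Subtype.ext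
  rcases he with h1 | h2
  · have hv : other a e = e.1.2 := if_pos h1
    have hlt : a < other a e := by rw [hv, ← h1]; exact e.2
    show (dite _ _ _ : EI n).1 = e.1
    rw [dif_pos hlt]
    exact Prod.ext h1.symm hv
  · have h1 : e.1.1 ≠ a := by
      intro h'
      have := e.2
      rw [h', h2] at this
      exact lt_irrefl a this
    have hv : other a e = e.1.1 := if_neg h1
    have hnlt : ¬ a < other a e := by
      rw [hv]
      intro hlt
      have := e.2
      rw [h2] at this
      exact lt_irrefl a (lt_trans hlt this)
    show (dite _ _ _ : EI n).1 = e.1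
    rw [dif_neg hnlt]
    exact Prod.ext hv h2.symm

lemma adj_iff_edge (a v : Fin n) (h : v ≠ a) (x : Cfg n) :
    (graphOf x).Adj a v ↔ x (edgeAt a v h) = true := by
  unfold edgeAt
  constructor
  · rintro (⟨hlt, hx⟩ | ⟨hlt, hx⟩)
    · rw [dif_pos hlt]; exact hx
    · rw [dif_neg (asymm hlt)]; exact hx
  · intro hx
    by_cases hlt : a < v
    · exact Or.inl ⟨hlt, by rw [dif_pos hlt] at hx; exact hx⟩
    · exact Or.inr ⟨lt_of_le_of_ne (le_of_not_gt hlt) h, by rw [dif_neg hlt] at hx; exact hx⟩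

lemma card_filter_other (a : Fin n) (W : Finset (Fin n)) (haW : a ∉ W) :
    (Finset.univ.filter (fun i : {e // qp a e} => other a i.1 ∈ W)).card = W.card := by
  refine Finset.card_bij' (fun i _ => other a i.1)
    (fun v hv => (⟨edgeAt a v (fun h => haW (h ▸ hv)), qp_edgeAt _ _ _⟩ : {e // qp a e}))
    ?_ ?_ ?_ ?_
  · intro i hi
    exact (Finset.mem_filter.1 hi).2
  · intro v hv
    simp only [Finset.mem_filter, Finset.mem_univ, true_and]
    rw [other_edgeAt]
    exact hv
  · intro i hi
    exact Subtype.ext (edgeAt_other a i.1 i.2)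
  · intro v hv
    simp only
    rw [other_edgeAt]

/-- expectation of `exp (t * #neighbours of a in W)` over the coordinates touching `a`,
for `W` with `a ∉ W`. -/
lemma exp_nbrs (p t : ℝ) (a : Fin n) (W : Finset (Fin n)) (haW : a ∉ W)
    (x₂ : {e // ¬ qp a e} → Bool) :
    ∑ x₁ : {e // qp a e} → Bool, (∏ i, phi p (x₁ i)) *
        Real.exp (t * ((nbrs a W (merge (qp a) x₁ x₂)).card : ℝ))
      = (1 - p + p * Real.exp t) ^ W.card := by
  unfold nbrs
  have key : ∀ x₁ : {e // qp a e} → Bool,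
      Real.exp (t * ((W.filter fun v => (graphOf (merge (qp a) x₁ x₂)).Adj a v).card : ℝ))
        = ∏ i : {e // qp a e},
            (if other a i.1 ∈ W then (if x₁ i = true then Real.exp t else 1) else 1) := by
    intro x₁
    have hcard : ((W.filter fun v => (graphOf (merge (qp a) x₁ x₂)).Adj a v).card : ℝ)
        = ∑ v ∈ W, (if (graphOf (merge (qp a) x₁ x₂)).Adj a v then (1:ℝ) else 0) := by
      rw [Finset.card_filter]
      push_cast
      rfl
    rw [hcard, Finset.mul_sum, Real.exp_sum]
    have hW : ∏ v ∈ W, Real.exp (t * if (graphOf (merge (qp a) x₁ x₂)).Adj a v then (1:ℝ) else 0)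
        = ∏ v ∈ W, (if (graphOf (merge (qp a) x₁ x₂)).Adj a v then Real.exp t else 1) := by
      refine Finset.prod_congr rfl fun v _ => ?_
      split <;> simp
    rw [hW]
    rw [show (∏ i : {e // qp a e},
        (if other a i.1 ∈ W then (if x₁ i = true then Real.exp t else 1) else 1))
      = ∏ i ∈ Finset.univ.filter (fun i : {e // qp a e} => other a i.1 ∈ W),
          (if x₁ i = true then Real.exp t else 1) by
        rw [Finset.prod_filter]]
    refine Finset.prod_bij' (fun v hv => (⟨edgeAt a v (fun h => haW (h ▸ hv)), qp_edgeAt _ _ _⟩ :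
        {e // qp a e})) (fun i _ => other a i.1) ?_ ?_ ?_ ?_ ?_
    · intro v hv
      simp only [Finset.mem_filter, Finset.mem_univ, true_and]
      rw [other_edgeAt]; exact hv
    · intro i hi
      exact (Finset.mem_filter.1 hi).2
    · intro v hv
      simp only
      rw [other_edgeAt]
    · intro i hi
      exact Subtype.ext (edgeAt_other a i.1 i.2)
    · intro v hv
      have hne : v ≠ a := fun h => haW (h ▸ hv)
      have hm : merge (qp a) x₁ x₂ (edgeAt a v hne) = x₁ ⟨edgeAt a v hne, qp_edgeAt a v hne⟩ := by
        rw [merge, dif_pos (qp_edgeAt a v hne)]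
      by_cases hadj : (graphOf (merge (qp a) x₁ x₂)).Adj a v
      · rw [if_pos hadj,
          if_pos (show x₁ ⟨edgeAt a v hne, qp_edgeAt a v hne⟩ = true from
            hm ▸ (adj_iff_edge a v hne (merge (qp a) x₁ x₂)).1 hadj)]
      · rw [if_neg hadj,
          if_neg (show ¬ x₁ ⟨edgeAt a v hne, qp_edgeAt a v hne⟩ = true from fun hx =>
            hadj ((adj_iff_edge a v hne (merge (qp a) x₁ x₂)).2 (hm.symm ▸ hx)))]
  have step1 : ∑ x₁ : {e // qp a e} → Bool, (∏ i, phi p (x₁ i)) *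
        Real.exp (t * ((W.filter fun v => (graphOf (merge (qp a) x₁ x₂)).Adj a v).card : ℝ))
      = ∑ x₁ : {e // qp a e} → Bool, ∏ i : {e // qp a e}, (phi p (x₁ i) *
          (if other a i.1 ∈ W then (if x₁ i = true then Real.exp t else 1) else 1)) := by
    refine Finset.sum_congr rfl fun x₁ _ => ?_
    rw [key x₁, Finset.prod_mul_distrib]
  rw [step1]
  have H := sum_prod_phi p
    (fun (i : {e // qp a e}) (b : Bool) =>
      if other a i.1 ∈ W then (if b = true then Real.exp t else 1) else 1)
  beta_reduce at H
  rw [H]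
  refine Eq.trans ?_ (rfl : (1 - p + p * Real.exp t) ^ W.card = _)
  have step2 : ∀ i : {e // qp a e},
      (p * (if other a i.1 ∈ W then (if (true : Bool) = true then Real.exp t else 1) else 1)
        + (1 - p) * (if other a i.1 ∈ W then (if (false : Bool) = true then Real.exp t else 1) else 1))
      = (if other a i.1 ∈ W then (1 - p + p * Real.exp t) else 1) := by
    intro i
    by_cases h : other a i.1 ∈ W <;> simp [h] <;> ring
  rw [Finset.prod_congr rfl fun i _ => step2 i]
  rw [← Finset.prod_filter, Finset.prod_const, card_filter_other a W haW]

lemma merge_pos {q : EI n → Prop} [DecidablePred q] (x₁ : {e // q e} → Bool)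
    (x₂ : {e // ¬ q e} → Bool) {e : EI n} (h : q e) : merge q x₁ x₂ e = x₁ ⟨e, h⟩ := dif_pos h

lemma merge_neg {q : EI n → Prop} [DecidablePred q] (x₁ : {e // q e} → Bool)
    (x₂ : {e // ¬ q e} → Bool) {e : EI n} (h : ¬ q e) : merge q x₁ x₂ e = x₂ ⟨e, h⟩ := dif_neg h

lemma nbrs_congr {a : Fin n} {W : Finset (Fin n)} {x x' : Cfg n}
    (h : ∀ e : EI n, qp a e → x e = x' e) : nbrs a W x = nbrs a W x' := by
  unfold nbrs
  apply Finset.filter_congr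
  intro v _
  exact adj_congr_on (fun e he => h e he)

/-- the main induction: the exponential bound on the component tail. -/
lemma main (p t M : ℝ) (hp0 : 0 ≤ p) (hp1 : p ≤ 1) (ht : 0 ≤ t)
    (hM : (1 - p + p * Real.exp t) ^ n ≤ Real.exp t * M) :
    ∀ (k : ℕ) (V A : Finset (Fin n)), V.card ≤ k → A ⊆ V → ∀ y : ℕ,
      (∑ x : Cfg n, wt p x * (if y ≤ (comp V A x).card then (1:ℝ) else 0))
        ≤ Real.exp (t * A.card) * M ^ y := by
  have hexp1 : (1:ℝ) ≤ Real.exp t := Real.one_le_exp ht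
  have hbase1 : (1:ℝ) ≤ 1 - p + p * Real.exp t := by nlinarith
  have hM0 : 0 < M := by
    have h1 : (1:ℝ) ≤ (1 - p + p * Real.exp t) ^ n := one_le_pow₀ hbase1
    by_contra h
    push_neg at h
    nlinarith [Real.exp_pos t]
  have base0 : ∀ (V A : Finset (Fin n)),
      (∑ x : Cfg n, wt p x * (if (0:ℕ) ≤ (comp V A x).card then (1:ℝ) else 0))
        ≤ Real.exp (t * A.card) * M ^ (0:ℕ) := by
    intro V A
    have h0 : ∀ x : Cfg n,
        wt p x * (if (0:ℕ) ≤ (comp V A x).card then (1:ℝ) else 0) = wt p x := by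
      intro x; rw [if_pos (Nat.zero_le _), mul_one]
    rw [Finset.sum_congr rfl fun x _ => h0 x]
    have h1 : ∑ x : Cfg n, wt p x = 1 := by
      have := sum_prod_phi_one (ι := EI n) p
      simpa [wt] using this
    rw [h1, pow_zero, mul_one]
    exact Real.one_le_exp (mul_nonneg ht (Nat.cast_nonneg _))
  have baseEmpty : ∀ (V : Finset (Fin n)) (y' : ℕ),
      (∑ x : Cfg n, wt p x * (if (y' + 1 : ℕ) ≤ (comp V ∅ x).card then (1:ℝ) else 0))
        ≤ Real.exp (t * ((∅ : Finset (Fin n)).card : ℝ)) * M ^ (y' + 1) := by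
    intro V y'
    have h0 : ∀ x : Cfg n,
        wt p x * (if (y' + 1 : ℕ) ≤ (comp V ∅ x).card then (1:ℝ) else 0) = 0 := by
      intro x
      rw [comp_empty, if_neg (by simp), mul_zero]
    rw [Finset.sum_congr rfl fun x _ => h0 x, Finset.sum_const, smul_zero]
    positivity
  intro k
  induction k with
  | zero =>
    intro V A hVk hAV y
    match y with
    | 0 => exact base0 V A
    | (y' + 1) =>
      rcases Finset.eq_empty_or_nonempty A with rfl | ⟨a, haA⟩
      · exact baseEmpty V y'
      · exfalso
        have : 0 < V.card := Finset.card_pos.2 ⟨a, hAV haA⟩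
        omega
  | succ k ih =>
    intro V A hVk hAV y
    match y with
    | 0 => exact base0 V A
    | (y' + 1) =>
      rcases Finset.eq_empty_or_nonempty A with rfl | ⟨a, haA⟩
      · exact baseEmpty V y'
      -- main step: explore the vertex `a`
      have haV : a ∈ V := hAV haA
      have haV' : a ∉ V.erase a := Finset.notMem_erase a V
      have hV'card : (V.erase a).card ≤ k := by
        rw [Finset.card_erase_of_mem haV]; omega
      set x₁0 : {e // qp a e} → Bool := fun _ => false with hx10
      set x₂0 : {e // ¬ qp a e} → Bool := fun _ => false with hx20
      have hrw : ∀ x : Cfg n,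
          wt p x * (if (y' + 1 : ℕ) ≤ (comp V A x).card then (1:ℝ) else 0)
          = wt p x * (if y' ≤ (comp (V.erase a) (A.erase a ∪ nbrs a (V.erase a) x) x).card
              then (1:ℝ) else 0) := by
        intro x
        rw [card_comp_del haA hAV x]
        congr 1
        simp only [Nat.add_le_add_iff_right]
      rw [Finset.sum_congr rfl fun x _ => hrw x, sum_split (qp a)]
      have hsummand : ∀ (x₁ : {e // qp a e} → Bool) (x₂ : {e // ¬ qp a e} → Bool),
          wt p (merge (qp a) x₁ x₂) *
            (if y' ≤ (comp (V.erase a)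
                (A.erase a ∪ nbrs a (V.erase a) (merge (qp a) x₁ x₂))
                (merge (qp a) x₁ x₂)).card then (1:ℝ) else 0)
          = (∏ i, phi p (x₁ i)) * ((∏ i, phi p (x₂ i)) *
              (if y' ≤ (comp (V.erase a)
                (A.erase a ∪ nbrs a (V.erase a) (merge (qp a) x₁ x₂0))
                (merge (qp a) x₁0 x₂)).card then (1:ℝ) else 0)) := by
        intro x₁ x₂
        have e1 : nbrs a (V.erase a) (merge (qp a) x₁ x₂)
            = nbrs a (V.erase a) (merge (qp a) x₁ x₂0) :=
          nbrs_congr (fun e he => by rw [merge_pos _ _ he, merge_pos _ _ he])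
        have e2 : comp (V.erase a) (A.erase a ∪ nbrs a (V.erase a) (merge (qp a) x₁ x₂0))
              (merge (qp a) x₁ x₂)
            = comp (V.erase a) (A.erase a ∪ nbrs a (V.erase a) (merge (qp a) x₁ x₂0))
              (merge (qp a) x₁0 x₂) :=
          comp_congr_off haV' _ (fun e he => by rw [merge_neg _ _ he, merge_neg _ _ he])
        rw [e1, e2, wt_merge, mul_assoc]
      rw [Finset.sum_congr rfl fun x₁ _ => Finset.sum_congr rfl fun x₂ _ => hsummand x₁ x₂]
      have hlift : ∀ S : Finset (Fin n),
          (∑ x₂ : {e // ¬ qp a e} → Bool, (∏ i, phi p (x₂ i)) *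
              (if y' ≤ (comp (V.erase a) S (merge (qp a) x₁0 x₂)).card then (1:ℝ) else 0))
          = ∑ x : Cfg n, wt p x *
              (if y' ≤ (comp (V.erase a) S x).card then (1:ℝ) else 0) := by
        intro S
        rw [sum_split (qp a) (fun x => wt p x *
          (if y' ≤ (comp (V.erase a) S x).card then (1:ℝ) else 0))]
        have hpt : ∀ (x₁' : {e // qp a e} → Bool) (x₂ : {e // ¬ qp a e} → Bool),
            wt p (merge (qp a) x₁' x₂) *
              (if y' ≤ (comp (V.erase a) S (merge (qp a) x₁' x₂)).card then (1:ℝ) else 0)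
            = (∏ i, phi p (x₁' i)) * ((∏ i, phi p (x₂ i)) *
              (if y' ≤ (comp (V.erase a) S (merge (qp a) x₁0 x₂)).card then (1:ℝ) else 0)) := by
          intro x₁' x₂
          have e2 : comp (V.erase a) S (merge (qp a) x₁' x₂)
              = comp (V.erase a) S (merge (qp a) x₁0 x₂) :=
            comp_congr_off haV' _ (fun e he => by rw [merge_neg _ _ he, merge_neg _ _ he])
          rw [e2, wt_merge, mul_assoc]
        rw [Finset.sum_congr rfl fun x₁' _ => Finset.sum_congr rfl fun x₂ _ => hpt x₁' x₂]
        simp only [← Finset.mul_sum]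
        rw [← Finset.sum_mul, sum_prod_phi_one, one_mul]
      -- bound the inner sum by the induction hypothesis
      have hinner : ∀ x₁ : {e // qp a e} → Bool,
          (∑ x₂ : {e // ¬ qp a e} → Bool, (∏ i, phi p (x₂ i)) *
              (if y' ≤ (comp (V.erase a)
                (A.erase a ∪ nbrs a (V.erase a) (merge (qp a) x₁ x₂0))
                (merge (qp a) x₁0 x₂)).card then (1:ℝ) else 0))
          ≤ Real.exp (t * ((A.erase a ∪ nbrs a (V.erase a) (merge (qp a) x₁ x₂0)).card : ℝ))
              * M ^ y' := by
        intro x₁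
        rw [hlift]
        refine ih (V.erase a) _ hV'card ?_ y'
        refine Finset.union_subset (Finset.erase_subset_erase a hAV) ?_
        unfold nbrs
        exact Finset.filter_subset _ _
      have hcardB : ∀ x₁ : {e // qp a e} → Bool,
          Real.exp (t * ((A.erase a ∪ nbrs a (V.erase a) (merge (qp a) x₁ x₂0)).card : ℝ))
          ≤ Real.exp (t * ((A.erase a).card : ℝ)) *
              Real.exp (t * ((nbrs a (V.erase a) (merge (qp a) x₁ x₂0)).card : ℝ)) := by
        intro x₁
        rw [← Real.exp_add, ← mul_add]
        apply Real.exp_le_exp.2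
        apply mul_le_mul_of_nonneg_left _ ht
        have := Finset.card_union_le (A.erase a) (nbrs a (V.erase a) (merge (qp a) x₁ x₂0))
        push_cast
        exact_mod_cast this
      -- put it together
      calc ∑ x₁ : {e // qp a e} → Bool, ∑ x₂ : {e // ¬ qp a e} → Bool,
            (∏ i, phi p (x₁ i)) * ((∏ i, phi p (x₂ i)) *
              (if y' ≤ (comp (V.erase a)
                (A.erase a ∪ nbrs a (V.erase a) (merge (qp a) x₁ x₂0))
                (merge (qp a) x₁0 x₂)).card then (1:ℝ) else 0))
          ≤ ∑ x₁ : {e // qp a e} → Bool, (∏ i, phi p (x₁ i)) *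
              ((Real.exp (t * ((A.erase a).card : ℝ)) * M ^ y') *
                Real.exp (t * ((nbrs a (V.erase a) (merge (qp a) x₁ x₂0)).card : ℝ))) := by
            refine Finset.sum_le_sum fun x₁ _ => ?_
            rw [← Finset.mul_sum]
            refine mul_le_mul_of_nonneg_left ?_
              (Finset.prod_nonneg fun i _ => phi_nonneg hp0 hp1 _)
            refine le_trans (hinner x₁) ?_
            calc Real.exp (t * ((A.erase a ∪ nbrs a (V.erase a)
                    (merge (qp a) x₁ x₂0)).card : ℝ)) * M ^ y'
                ≤ (Real.exp (t * ((A.erase a).card : ℝ)) *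
                    Real.exp (t * ((nbrs a (V.erase a) (merge (qp a) x₁ x₂0)).card : ℝ)))
                    * M ^ y' := by
                  exact mul_le_mul_of_nonneg_right (hcardB x₁) (pow_nonneg hM0.le y')
              _ = (Real.exp (t * ((A.erase a).card : ℝ)) * M ^ y') *
                    Real.exp (t * ((nbrs a (V.erase a) (merge (qp a) x₁ x₂0)).card : ℝ)) := by
                  ring
        _ = (Real.exp (t * ((A.erase a).card : ℝ)) * M ^ y') *
              ∑ x₁ : {e // qp a e} → Bool, (∏ i, phi p (x₁ i)) *
                Real.exp (t * ((nbrs a (V.erase a) (merge (qp a) x₁ x₂0)).card : ℝ)) := by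
            rw [Finset.mul_sum]
            exact Finset.sum_congr rfl fun x₁ _ => by ring
        _ = (Real.exp (t * ((A.erase a).card : ℝ)) * M ^ y') *
              (1 - p + p * Real.exp t) ^ (V.erase a).card := by
            rw [exp_nbrs p t a (V.erase a) haV' x₂0]
        _ ≤ (Real.exp (t * ((A.erase a).card : ℝ)) * M ^ y') *
              (1 - p + p * Real.exp t) ^ n := by
            refine mul_le_mul_of_nonneg_left ?_ (by positivity)
            refine pow_le_pow_right₀ hbase1 ?_
            calc (V.erase a).card ≤ (Finset.univ : Finset (Fin n)).card :=
                  Finset.card_le_univ _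
              _ = n := by simp
        _ ≤ (Real.exp (t * ((A.erase a).card : ℝ)) * M ^ y') * (Real.exp t * M) := by
            refine mul_le_mul_of_nonneg_left hM ?_
            positivity
        _ = Real.exp (t * (A.card : ℝ)) * M ^ (y' + 1) := by
            rw [← Finset.card_erase_add_one haA]
            push_cast
            rw [mul_add, Real.exp_add, pow_succ, mul_one]
            ring
      -- done

/-! ### from the measure to the weighted sum -/

instance bernoulli_finite (p : ℝ) : IsFiniteMeasure (bernoulliMeasure p) := by
  constructor
  have : bernoulliMeasure p Set.univ
      = ENNReal.ofReal p * 1 + ENNReal.ofReal (1 - p) * 1 := by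
    simp [_root_.bernoulliMeasure]
  rw [this]
  simp only [mul_one]
  exact ENNReal.add_lt_top.2 ⟨ENNReal.ofReal_lt_top, ENNReal.ofReal_lt_top⟩

lemma bernoulli_singleton (p : ℝ) (hp0 : 0 ≤ p) (hp1 : p ≤ 1) (b : Bool) :
    bernoulliMeasure p {b} = ENNReal.ofReal (phi p b) := by
  cases b <;>
    simp [_root_.bernoulliMeasure, phi, Measure.dirac_apply' _ (measurableSet_singleton _)]

lemma erdosRenyi_singleton (p : ℝ) (hp0 : 0 ≤ p) (hp1 : p ≤ 1) (x : Cfg n) :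
    (erdosRenyi n p) {x} = ENNReal.ofReal (wt p x) := by
  rw [show ({x} : Set (Cfg n)) = Set.univ.pi (fun e => {x e}) from
    (Set.univ_pi_singleton x).symm]
  rw [erdosRenyi, Measure.pi_pi]
  rw [Finset.prod_congr rfl fun e _ => bernoulli_singleton p hp0 hp1 (x e)]
  rw [← ENNReal.ofReal_prod_of_nonneg (fun e _ => phi_nonneg hp0 hp1 _)]
  rfl

lemma measure_eq_sum (p : ℝ) (hp0 : 0 ≤ p) (hp1 : p ≤ 1)
    (P : Cfg n → Prop) [DecidablePred P] :
    ((erdosRenyi n p) {x | P x}).toReal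
      = ∑ x : Cfg n, wt p x * (if P x then (1:ℝ) else 0) := by
  have hset : {x : Cfg n | P x} = ⋃ x ∈ Finset.univ.filter P, ({x} : Set (Cfg n)) := by
    ext z
    simp
  rw [hset, measure_biUnion_finset ?hd ?hm]
  case hd =>
    intro u hu v hv huv
    simp only [Function.onFun]
    exact Set.disjoint_singleton.2 huv
  case hm =>
    intro x _
    exact measurableSet_singleton x
  rw [Finset.sum_congr rfl fun x _ => erdosRenyi_singleton p hp0 hp1 x]
  rw [← ENNReal.ofReal_sum_of_nonneg (fun x _ => wt_nonneg hp0 hp1 x)]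
  rw [ENNReal.toReal_ofReal (Finset.sum_nonneg fun x _ => wt_nonneg hp0 hp1 x)]
  rw [Finset.sum_filter]
  exact Finset.sum_congr rfl fun x _ => by
    by_cases h : P x <;> simp [h]

lemma compSize_eq (x : Cfg n) (v0 : Fin n) :
    compSize (graphOf x) v0 = (comp Finset.univ {v0} x).card := by
  rw [compSize, Nat.card_eq_fintype_card, Fintype.card_subtype]
  congr 1
  ext v
  simp [comp, gr_univ]

end ERP

theorem stmt7
    (c : ℝ) (hc0 : 0 < c) (hc1 : c < 1) (n : ℕ) (hn : 2 ≤ n) (y : ℕ) :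
    ((erdosRenyi n (c / n)) {x | y ≤ compSize (graphOf x) ⟨0, by omega⟩}).toReal ≤
      (1 / c) * Real.exp (-((c - 1 - Real.log c) * y)) := by
  have hn0 : (0:ℝ) < n := by
    have : (2:ℝ) ≤ n := by exact_mod_cast hn
    linarith
  have hp0 : 0 ≤ c / n := by positivity
  have hp1 : c / n ≤ 1 := by
    rw [div_le_one hn0]
    have : (2:ℝ) ≤ n := by exact_mod_cast hn
    linarith
  set t : ℝ := -Real.log c with hT
  have ht : 0 ≤ t := by
    rw [hT, neg_nonneg]
    exact Real.log_nonpos hc0.le hc1.le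
  have hexpt : Real.exp t = c⁻¹ := by
    rw [hT, Real.exp_neg, Real.exp_log hc0]
  set M : ℝ := Real.exp (Real.log c + 1 - c) with hMdef
  have hM : (1 - c / n + c / n * Real.exp t) ^ n ≤ Real.exp t * M := by
    have h1 : 1 - c / n + c / n * Real.exp t = 1 + (1 - c) / n := by
      rw [hexpt]
      field_simp
      ring
    have h2 : Real.exp t * M = Real.exp (1 - c) := by
      rw [hexpt, hMdef, show Real.log c + 1 - c = Real.log c + (1 - c) by ring,
        Real.exp_add, Real.exp_log hc0]
      field_simp
    rw [h1, h2]
    have h3 : 1 + (1 - c) / n ≤ Real.exp ((1 - c) / n) := by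
      have := Real.add_one_le_exp ((1 - c) / n)
      linarith
    have h4 : (0:ℝ) ≤ 1 + (1 - c) / n := by
      have : 0 ≤ (1 - c) / n := by
        apply div_nonneg _ hn0.le
        linarith
      linarith
    calc (1 + (1 - c) / n) ^ n ≤ (Real.exp ((1 - c) / n)) ^ n := pow_le_pow_left₀ h4 h3 n
      _ = Real.exp ((1 - c) / n * n) := by
          rw [mul_comm, ← Real.exp_nat_mul]
      _ = Real.exp (1 - c) := by
          congr 1
          field_simp
  have hmain := ERP.main (c / n) t M hp0 hp1 ht hM n Finset.univ ({⟨0, by omega⟩} : Finset (Fin n))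
    (by simp) (Finset.subset_univ _) y
  have hbre := ERP.measure_eq_sum (n := n) (c / n) hp0 hp1
    (fun x => y ≤ compSize (graphOf x) ⟨0, by omega⟩)
  beta_reduce at hbre
  have hbre2 : ((erdosRenyi n (c / n)) {x | y ≤ compSize (graphOf x) ⟨0, by omega⟩}).toReal
      = ∑ x : ERP.Cfg n, ERP.wt (c / n) x *
          (if y ≤ (ERP.comp Finset.univ {⟨0, by omega⟩} x).card then (1:ℝ) else 0) := by
    rw [hbre]
    exact Finset.sum_congr rfl fun x _ => by rw [ERP.compSize_eq]
  rw [hbre2]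
  refine le_trans hmain (le_of_eq ?_)
  rw [Finset.card_singleton]
  push_cast
  rw [mul_one, hexpt, hMdef, ← Real.exp_nat_mul]
  rw [one_div]
  congr 1
  ring
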